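/- Fractal Taylor series: let h : F → ℝ be bounded and F^α-differentiable any number of times with (D_F^α)^k h bounded for every integer k > 0, and suppose g = φ[h] satisfies the ordinary Taylor expansion g(u) = Σ_{k=0}^∞ ((u − y)^k / k!)·g^{(k)}(y) for all u, y ∈ [S_F^α(a), S_F^α(b)]. Then for all θ, θ' ∈ C(a,b) = w([a,b]): h(θ) = Σ_{k=0}^∞ ((J(θ) − J(θ'))^k / k!)·((D_F^α)^k h)(θ'). -/

import Mathlib

open Set
open scoped ENNReal

structure Subdivision (a b : ℝ) where
  k : ℕ
  t : ℕ → ℝ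
  first : t 0 = a
  last : t k = b
  mono : ∀ i < k, t i < t (i + 1)

def Subdivision.MeshLE {a b : ℝ} (P : Subdivision a b) (δ : ℝ) : Prop :=
  ∀ i < P.k, P.t (i + 1) - P.t i ≤ δ

noncomputable def sigmaSum {n : ℕ} (α : ℝ) (w : ℝ → EuclideanSpace ℝ (Fin n))
    {a b : ℝ} (P : Subdivision a b) : ℝ :=
  (∑ i ∈ Finset.range P.k, ‖w (P.t (i + 1)) - w (P.t i)‖ ^ α) / Real.Gamma (α + 1)

noncomputable def gammaDelta {n : ℕ} (α : ℝ) (w : ℝ → EuclideanSpace ℝ (Fin n))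
    (a b δ : ℝ) : ℝ≥0∞ :=
  ⨅ (P : Subdivision a b) (_ : P.MeshLE δ), ENNReal.ofReal (sigmaSum α w P)

noncomputable def massFn {n : ℕ} (α : ℝ) (w : ℝ → EuclideanSpace ℝ (Fin n))
    (a b : ℝ) : ℝ≥0∞ :=
  ⨆ (δ : ℝ) (_ : 0 < δ), gammaDelta α w a b δ

/-- The staircase (rise) function S_F^α(t) = γ^α(F,a₀,t). -/
noncomputable def SF {n : ℕ} (α : ℝ) (w : ℝ → EuclideanSpace ℝ (Fin n))
    (a₀ : ℝ) (t : ℝ) : ℝ :=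
  (massFn α w a₀ t).toReal

/-- `l` is the F-limit of `f` as θ' → θ through points of `F`. -/
def IsFLimit {n : ℕ} (F : Set (EuclideanSpace ℝ (Fin n)))
    (f : EuclideanSpace ℝ (Fin n) → ℝ) (θ : EuclideanSpace ℝ (Fin n)) (l : ℝ) : Prop :=
  ∀ ε > (0 : ℝ), ∃ δ > (0 : ℝ), ∀ θ' ∈ F, θ' ≠ θ → ‖θ' - θ‖ < δ → |f θ' - l| < ε

/-- `f` is F-continuous at θ. -/
def FContinuousAt {n : ℕ} (F : Set (EuclideanSpace ℝ (Fin n)))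
    (f : EuclideanSpace ℝ (Fin n) → ℝ) (θ : EuclideanSpace ℝ (Fin n)) : Prop :=
  IsFLimit F f θ (f θ)

/-- The F^α-derivative of `f` at θ is `l`:
l = F-lim_{θ'→θ} (f(θ') − f(θ))/(J(θ') − J(θ)). -/
def HasFAlphaDerivAt {n : ℕ} (F : Set (EuclideanSpace ℝ (Fin n)))
    (J : EuclideanSpace ℝ (Fin n) → ℝ) (f : EuclideanSpace ℝ (Fin n) → ℝ)
    (θ : EuclideanSpace ℝ (Fin n)) (l : ℝ) : Prop :=
  IsFLimit F (fun θ' => (f θ' - f θ) / (J θ' - J θ)) θ l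

/-- Upper F^α-sum U^α[f,F,P] of `f` over the subdivision `P`. -/
noncomputable def upperFSum {n : ℕ} (α : ℝ) (w : ℝ → EuclideanSpace ℝ (Fin n))
    (a₀ : ℝ) (f : EuclideanSpace ℝ (Fin n) → ℝ) {a b : ℝ} (P : Subdivision a b) : ℝ :=
  ∑ i ∈ Finset.range P.k,
    sSup (f '' (w '' Icc (P.t i) (P.t (i + 1)))) *
      (SF α w a₀ (P.t (i + 1)) - SF α w a₀ (P.t i))

/-- Lower F^α-sum L^α[f,F,P] of `f` over the subdivision `P`. -/
noncomputable def lowerFSum {n : ℕ} (α : ℝ) (w : ℝ → EuclideanSpace ℝ (Fin n))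
    (a₀ : ℝ) (f : EuclideanSpace ℝ (Fin n) → ℝ) {a b : ℝ} (P : Subdivision a b) : ℝ :=
  ∑ i ∈ Finset.range P.k,
    sInf (f '' (w '' Icc (P.t i) (P.t (i + 1)))) *
      (SF α w a₀ (P.t (i + 1)) - SF α w a₀ (P.t i))

/-- `f` is F^α-integrable on C(a,b) with integral `v`:
inf of upper sums = sup of lower sums = v. -/
def HasFIntegral {n : ℕ} (α : ℝ) (w : ℝ → EuclideanSpace ℝ (Fin n)) (a₀ : ℝ)
    (f : EuclideanSpace ℝ (Fin n) → ℝ) (a b : ℝ) (v : ℝ) : Prop :=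
  sInf (Set.range fun P : Subdivision a b => upperFSum α w a₀ f P) = v ∧
  sSup (Set.range fun P : Subdivision a b => lowerFSum α w a₀ f P) = v


/-!
Write `S = S_F^α`. If `f ∘ w = G ∘ S` on `[a, b]` and `G` is differentiable on `[S a, S b]`, then
the `F^α`-difference quotients of `f` along the curve are slopes of `G` along `S`; as `S` is
continuous and strictly increasing these tend to `G'`, so `D_F^α f ∘ w = G' ∘ S`. Continuity of `S`
comes from additivity of the mass `γ^α` over adjacent intervals: cutting a fine subdivision at a
point costs only two short steps, which are small by uniform continuity of `w`. The Taylor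
hypothesis makes `g` analytic enough on `[S a, S b]` for `g⁽ᵏ⁾` to have derivative `g⁽ᵏ⁺¹⁾` there,
so inductively `(D_F^α)^k h ∘ w = g⁽ᵏ⁾ ∘ S`, and the fractal series is the Taylor series of `g`.
-/

open Filter Topology
open scoped Nat

namespace Subdivision

variable {a b c : ℝ}

lemma t_le_t (P : Subdivision a b) {i j : ℕ} (hij : i ≤ j) (hj : j ≤ P.k) : P.t i ≤ P.t j := by
  induction j, hij using Nat.le_induction with
  | base => exact le_rfl
  | succ j _ ih => exact (ih (by omega)).trans (P.mono j (by omega)).le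

lemma t_mem_Icc (P : Subdivision a b) {i : ℕ} (hi : i ≤ P.k) : P.t i ∈ Icc a b :=
  ⟨by simpa only [P.first] using P.t_le_t (Nat.zero_le i) hi,
    by simpa only [P.last] using P.t_le_t hi le_rfl⟩

lemma exists_t_le_lt (P : Subdivision a b) {y : ℝ} (hy : y ∈ Ico a b) :
    ∃ i < P.k, P.t i ≤ y ∧ y < P.t (i + 1) := by
  classical
  set i := Nat.findGreatest (fun i => P.t i ≤ y) P.k
  have hi : P.t i ≤ y := Nat.findGreatest_spec (P := fun j => P.t j ≤ y) (Nat.zero_le _)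
    (by rw [P.first]; exact hy.1)
  have hik : i < P.k := (Nat.findGreatest_le _).lt_of_ne fun h => by
    rw [show i = P.k from h, P.last] at hi
    exact hy.2.not_ge hi
  exact ⟨i, hik, hi, lt_of_not_ge fun h => Nat.findGreatest_is_greatest (Nat.lt_succ_self i) hik h⟩

def refl (a : ℝ) : Subdivision a a where
  k := 0
  t _ := a
  first := rfl
  last := rfl
  mono _ h := absurd h (Nat.not_lt_zero _)

def single (h : a < b) : Subdivision a b where
  k := 1
  t i := if i = 0 then a else b
  first := rfl
  last := rfl
  mono i hi := by
    obtain rfl : i = 0 := by omega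
    simpa using h

def take (P : Subdivision a b) (i : ℕ) (hi : i ≤ P.k) : Subdivision a (P.t i) where
  k := i
  t := P.t
  first := P.first
  last := rfl
  mono j hj := P.mono j (by omega)

def drop (P : Subdivision a b) (i : ℕ) (hi : i ≤ P.k) : Subdivision (P.t i) b where
  k := P.k - i
  t j := P.t (i + j)
  first := rfl
  last := by rw [Nat.add_sub_cancel' hi, P.last]
  mono j hj := P.mono (i + j) (by omega)

def append (P : Subdivision a b) (Q : Subdivision b c) : Subdivision a c where
  k := P.k + Q.k
  t i := if i ≤ P.k then P.t i else Q.t (i - P.k)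
  first := by simp [P.first]
  last := by
    show (if P.k + Q.k ≤ P.k then _ else _) = c
    split_ifs with h
    · have hQ : Q.k = 0 := by omega
      have := Q.last
      rw [hQ, Q.first] at this
      rw [hQ, add_zero, P.last, this]
    · rw [Nat.add_sub_cancel_left, Q.last]
  mono i hi := by
    show (if i ≤ P.k then P.t i else Q.t (i - P.k)) <
      (if i + 1 ≤ P.k then P.t (i + 1) else Q.t (i + 1 - P.k))
    split_ifs with h₁ h₂ h₂
    · exact P.mono i (by omega)
    · obtain rfl : i = P.k := by omega
      rw [P.last, Nat.add_sub_cancel_left]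
      simpa [Q.first] using Q.mono 0 (by omega)
    · omega
    · rw [show i + 1 - P.k = i - P.k + 1 by omega]
      exact Q.mono _ (by omega)

lemma append_t_of_le (P : Subdivision a b) (Q : Subdivision b c) {i : ℕ} (hi : i ≤ P.k) :
    (P.append Q).t i = P.t i :=
  if_pos hi

lemma append_t_add (P : Subdivision a b) (Q : Subdivision b c) (j : ℕ) :
    (P.append Q).t (P.k + j) = Q.t j := by
  rcases j.eq_zero_or_pos with rfl | hj
  · rw [add_zero, append_t_of_le _ _ le_rfl, P.last, Q.first]
  · exact (if_neg (by omega)).trans (by rw [Nat.add_sub_cancel_left])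

lemma MeshLE.append {δ : ℝ} {P : Subdivision a b} {Q : Subdivision b c} (hP : P.MeshLE δ)
    (hQ : Q.MeshLE δ) : (P.append Q).MeshLE δ := by
  intro i hi
  rcases lt_or_ge i P.k with h | h
  · rw [append_t_of_le _ _ h, append_t_of_le _ _ h.le]
    exact hP i h
  · obtain ⟨j, rfl⟩ := Nat.exists_eq_add_of_le h
    rw [add_assoc, append_t_add, append_t_add]
    exact hQ j (by simp only [Subdivision.append] at hi; omega)

lemma MeshLE.take {δ : ℝ} {P : Subdivision a b} (hP : P.MeshLE δ) {i : ℕ} (hi : i ≤ P.k) :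
    (P.take i hi).MeshLE δ :=
  fun j hj => hP j (by simp only [Subdivision.take] at hj; omega)

lemma MeshLE.drop {δ : ℝ} {P : Subdivision a b} (hP : P.MeshLE δ) {i : ℕ} (hi : i ≤ P.k) :
    (P.drop i hi).MeshLE δ :=
  fun j hj => hP (i + j) (by simp only [Subdivision.drop] at hj; omega)

end Subdivision

section Sigma

variable {n : ℕ} {α : ℝ} {w : ℝ → EuclideanSpace ℝ (Fin n)} {a b c : ℝ}

lemma sigmaSum_nonneg (hα : 0 ≤ α) (P : Subdivision a b) : 0 ≤ sigmaSum α w P :=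
  div_nonneg (Finset.sum_nonneg fun _ _ => Real.rpow_nonneg (norm_nonneg _) _)
    (Real.Gamma_pos_of_pos (by linarith)).le

lemma sigmaSum_refl (a : ℝ) : sigmaSum α w (Subdivision.refl a) = 0 := by
  simp [sigmaSum, Subdivision.refl]

lemma sigmaSum_single (h : a < b) :
    sigmaSum α w (Subdivision.single h) = ‖w b - w a‖ ^ α / Real.Gamma (α + 1) := by
  simp [sigmaSum, Subdivision.single]

lemma sigmaSum_append (P : Subdivision a b) (Q : Subdivision b c) :
    sigmaSum α w (P.append Q) = sigmaSum α w P + sigmaSum α w Q := by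
  rw [sigmaSum, sigmaSum, sigmaSum, ← add_div]
  congr 1
  refine (Finset.sum_range_add _ P.k Q.k).trans (congrArg₂ _ ?_ ?_) <;>
    refine Finset.sum_congr rfl fun i hi => ?_ <;> rw [Finset.mem_range] at hi
  · rw [Subdivision.append_t_of_le _ _ hi, Subdivision.append_t_of_le _ _ hi.le]
  · rw [add_assoc, Subdivision.append_t_add, Subdivision.append_t_add]

lemma sigmaSum_take_add_drop (P : Subdivision a b) {i : ℕ} (hi : i ≤ P.k) :
    sigmaSum α w (P.take i hi) + sigmaSum α w (P.drop i hi) = sigmaSum α w P := by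
  rw [sigmaSum, sigmaSum, sigmaSum, ← add_div]
  congr 1
  conv_rhs => rw [← Nat.add_sub_cancel' hi]
  exact (Finset.sum_range_add _ i (P.k - i)).symm

lemma sigmaSum_take_mono (hα : 0 ≤ α) (P : Subdivision a b) {i j : ℕ} (hij : i ≤ j)
    (hj : j ≤ P.k) : sigmaSum α w (P.take i (hij.trans hj)) ≤ sigmaSum α w (P.take j hj) :=
  div_le_div_of_nonneg_right (Finset.sum_le_sum_of_subset_of_nonneg (Finset.range_mono hij)
    fun _ _ _ => Real.rpow_nonneg (norm_nonneg _) _) (Real.Gamma_pos_of_pos (by linarith)).le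

end Sigma

section Mass

variable {n : ℕ} {α : ℝ} {w : ℝ → EuclideanSpace ℝ (Fin n)}

lemma gammaDelta_le_sigmaSum {a b δ : ℝ} (P : Subdivision a b) (hP : P.MeshLE δ) :
    gammaDelta α w a b δ ≤ ENNReal.ofReal (sigmaSum α w P) :=
  iInf₂_le P hP

lemma gammaDelta_antitone (a b : ℝ) : Antitone (gammaDelta α w a b) :=
  fun _ _ h => le_iInf₂ fun P hP => gammaDelta_le_sigmaSum P fun i hi => (hP i hi).trans h

lemma gammaDelta_le_massFn {a b δ : ℝ} (hδ : 0 < δ) : gammaDelta α w a b δ ≤ massFn α w a b :=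
  le_iSup₂ (f := fun δ (_ : 0 < δ) => gammaDelta α w a b δ) δ hδ

lemma massFn_add_le_of {a b δ₀ : ℝ} {c A : ℝ≥0∞} (hδ₀ : 0 < δ₀)
    (h : ∀ δ, 0 < δ → δ ≤ δ₀ → gammaDelta α w a b δ + c ≤ A) : massFn α w a b + c ≤ A := by
  rw [massFn, ENNReal.biSup_add' ⟨δ₀, hδ₀⟩]
  refine iSup₂_le fun δ hδ => le_trans ?_ (h _ (lt_min hδ hδ₀) (min_le_right δ δ₀))
  gcongr
  exact gammaDelta_antitone a b (min_le_left δ δ₀)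

lemma gammaDelta_le_add (x y z δ : ℝ) :
    gammaDelta α w x z δ ≤ gammaDelta α w x y δ + gammaDelta α w y z δ :=
  ENNReal.le_iInf_add_iInf fun P Q => ENNReal.le_iInf_add_iInf fun hP hQ =>
    calc gammaDelta α w x z δ ≤ ENNReal.ofReal (sigmaSum α w (P.append Q)) :=
          gammaDelta_le_sigmaSum _ (hP.append hQ)
      _ ≤ _ := by rw [sigmaSum_append]; exact ENNReal.ofReal_add_le

lemma massFn_le_add (x y z : ℝ) : massFn α w x z ≤ massFn α w x y + massFn α w y z :=
  iSup₂_le fun _ hδ => (gammaDelta_le_add x y z _).trans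
    (add_le_add (gammaDelta_le_massFn hδ) (gammaDelta_le_massFn hδ))

lemma gammaDelta_self (x δ : ℝ) : gammaDelta α w x x δ = 0 :=
  le_antisymm ((gammaDelta_le_sigmaSum (Subdivision.refl x) fun i hi => absurd hi i.not_lt_zero)
    |>.trans_eq (by rw [sigmaSum_refl, ENNReal.ofReal_zero])) zero_le

lemma gammaDelta_le_of_sub_le {x y δ : ℝ} (hxy : x ≤ y) (hδ : y - x ≤ δ) :
    gammaDelta α w x y δ ≤ ENNReal.ofReal (‖w y - w x‖ ^ α / Real.Gamma (α + 1)) := by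
  rcases hxy.eq_or_lt with rfl | hlt
  · rw [gammaDelta_self]
    exact zero_le
  · refine (gammaDelta_le_sigmaSum (Subdivision.single hlt) fun i hi => ?_).trans_eq
      (by rw [sigmaSum_single])
    obtain rfl : i = 0 := Nat.lt_one_iff.mp hi
    simpa [Subdivision.single] using hδ

lemma exists_pos_gammaDelta_le {x z ε : ℝ} (hw : ContinuousOn w (Icc x z)) (hα : 0 < α)
    (hε : 0 < ε) : ∃ δ₀ > 0, ∀ ⦃u v δ : ℝ⦄, x ≤ u → u ≤ v → v ≤ z → v - u ≤ δ → δ ≤ δ₀ →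
      gammaDelta α w u v δ ≤ ENNReal.ofReal ε := by
  have hΓ : 0 < Real.Gamma (α + 1) := Real.Gamma_pos_of_pos (by linarith)
  obtain ⟨δ₀, hδ₀, hw'⟩ := Metric.uniformContinuousOn_iff.mp
    (isCompact_Icc.uniformContinuousOn_of_continuous hw) ((ε * Real.Gamma (α + 1)) ^ α⁻¹)
    (by positivity)
  refine ⟨δ₀ / 2, by positivity, fun u v δ hxu huv hvz hvu hδ => ?_⟩
  refine (gammaDelta_le_of_sub_le huv hvu).trans (ENNReal.ofReal_le_ofReal ?_)
  have hclose : ‖w v - w u‖ ≤ (ε * Real.Gamma (α + 1)) ^ α⁻¹ := by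
    rw [← dist_eq_norm]
    refine (hw' v ⟨hxu.trans huv, hvz⟩ u ⟨hxu, huv.trans hvz⟩ ?_).le
    rw [Real.dist_eq, abs_of_nonneg (sub_nonneg.2 huv)]
    linarith
  rw [div_le_iff₀ hΓ]
  calc ‖w v - w u‖ ^ α ≤ ((ε * Real.Gamma (α + 1)) ^ α⁻¹) ^ α :=
        Real.rpow_le_rpow (norm_nonneg _) hclose hα.le
    _ = ε * Real.Gamma (α + 1) := Real.rpow_inv_rpow (by positivity) hα.ne'

/-- Cutting `P` at `y` leaves two pieces of `P` plus two steps shorter than `δ`. -/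
lemma gammaDelta_add_gammaDelta_le_sigmaSum {x y z δ ε : ℝ} (hα : 0 ≤ α) (P : Subdivision x z)
    (hP : P.MeshLE δ) (hy : y ∈ Ico x z)
    (hshort : ∀ ⦃u v⦄, x ≤ u → u ≤ v → v ≤ z → v - u ≤ δ →
      gammaDelta α w u v δ ≤ ENNReal.ofReal ε) :
    gammaDelta α w x y δ + gammaDelta α w y z δ ≤
      ENNReal.ofReal (sigmaSum α w P) + (ENNReal.ofReal ε + ENNReal.ofReal ε) := by
  obtain ⟨i, hi, hty, hyt⟩ := P.exists_t_le_lt hy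
  have hgap : P.t (i + 1) - P.t i ≤ δ := hP i hi
  calc gammaDelta α w x y δ + gammaDelta α w y z δ
      ≤ (gammaDelta α w x (P.t i) δ + gammaDelta α w (P.t i) y δ) +
          (gammaDelta α w y (P.t (i + 1)) δ + gammaDelta α w (P.t (i + 1)) z δ) :=
        add_le_add (gammaDelta_le_add _ _ _ _) (gammaDelta_le_add _ _ _ _)
    _ ≤ (ENNReal.ofReal (sigmaSum α w (P.take i hi.le)) + ENNReal.ofReal ε) +
          (ENNReal.ofReal ε + ENNReal.ofReal (sigmaSum α w (P.drop (i + 1) hi))) := by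
        gcongr
        · exact gammaDelta_le_sigmaSum _ (hP.take _)
        · exact hshort (P.t_mem_Icc hi.le).1 hty hy.2.le (by linarith)
        · exact hshort hy.1 hyt.le (P.t_mem_Icc hi).2 (by linarith)
        · exact gammaDelta_le_sigmaSum _ (hP.drop _)
    _ = ENNReal.ofReal (sigmaSum α w (P.take i hi.le) + sigmaSum α w (P.drop (i + 1) hi)) +
          (ENNReal.ofReal ε + ENNReal.ofReal ε) := by
        rw [ENNReal.ofReal_add (sigmaSum_nonneg hα _) (sigmaSum_nonneg hα _)]
        ring
    _ ≤ ENNReal.ofReal (sigmaSum α w P) + (ENNReal.ofReal ε + ENNReal.ofReal ε) := by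
        rw [← sigmaSum_take_add_drop P hi]
        gcongr
        exact sigmaSum_take_mono hα P i.le_succ hi

lemma gammaDelta_add_gammaDelta_le {x y z δ ε : ℝ} (hα : 0 ≤ α) (hxy : x ≤ y) (hyz : y ≤ z)
    (hshort : ∀ ⦃u v⦄, x ≤ u → u ≤ v → v ≤ z → v - u ≤ δ →
      gammaDelta α w u v δ ≤ ENNReal.ofReal ε) :
    gammaDelta α w x y δ + gammaDelta α w y z δ ≤
      gammaDelta α w x z δ + (ENNReal.ofReal ε + ENNReal.ofReal ε) := by
  rcases hyz.eq_or_lt with rfl | hyz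
  · rw [gammaDelta_self, add_zero]
    exact le_self_add
  change _ ≤ (⨅ (P : Subdivision x z) (_ : P.MeshLE δ), ENNReal.ofReal (sigmaSum α w P)) + _
  simp only [ENNReal.iInf_add]
  exact le_iInf₂ fun P hP => gammaDelta_add_gammaDelta_le_sigmaSum hα P hP ⟨hxy, hyz⟩ hshort

lemma massFn_add_massFn_le {x y z : ℝ} (hw : ContinuousOn w (Icc x z)) (hα : 0 < α)
    (hxy : x ≤ y) (hyz : y ≤ z) : massFn α w x y + massFn α w y z ≤ massFn α w x z := by
  refine ENNReal.le_of_forall_pos_le_add fun ε hε _ => ?_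
  obtain ⟨δ₀, hδ₀, hshort⟩ := exists_pos_gammaDelta_le hw hα (half_pos hε)
  refine massFn_add_le_of hδ₀ fun δ hδ hδδ₀ => ?_
  rw [add_comm]
  refine massFn_add_le_of hδ fun δ' hδ' hδ'δ => ?_
  calc gammaDelta α w y z δ' + gammaDelta α w x y δ
      ≤ gammaDelta α w x y δ' + gammaDelta α w y z δ' := by
        rw [add_comm]; gcongr; exact gammaDelta_antitone x y hδ'δ
    _ ≤ gammaDelta α w x z δ' + (ENNReal.ofReal (ε / 2) + ENNReal.ofReal (ε / 2)) :=
        gammaDelta_add_gammaDelta_le hα.le hxy hyz fun u v hxu huv hvz hvu =>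
          hshort hxu huv hvz hvu (hδ'δ.trans hδδ₀)
    _ ≤ massFn α w x z + ε := by
        rw [← ENNReal.ofReal_add (by positivity) (by positivity), add_halves,
          ENNReal.ofReal_coe_nnreal]
        gcongr
        exact gammaDelta_le_massFn hδ'

lemma massFn_add_massFn {x y z : ℝ} (hw : ContinuousOn w (Icc x z)) (hα : 0 < α)
    (hxy : x ≤ y) (hyz : y ≤ z) : massFn α w x y + massFn α w y z = massFn α w x z :=
  (massFn_add_massFn_le hw hα hxy hyz).antisymm (massFn_le_add x y z)

lemma massFn_mono {x x' z' z : ℝ} (hw : ContinuousOn w (Icc x z)) (hα : 0 < α)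
    (hx : x ≤ x') (hx' : x' ≤ z') (hz : z' ≤ z) : massFn α w x' z' ≤ massFn α w x z :=
  calc massFn α w x' z' ≤ massFn α w x' z :=
        le_self_add.trans (massFn_add_massFn_le (hw.mono (Icc_subset_Icc hx le_rfl)) hα hx' hz)
    _ ≤ massFn α w x z := le_add_self.trans (massFn_add_massFn_le hw hα hx (hx'.trans hz))

end Mass

section Staircase

variable {n : ℕ} {α : ℝ} {w : ℝ → EuclideanSpace ℝ (Fin n)}

/-- If the mass near `x` stayed above `ε`, then for small `δ` the `δ`-fine sums over `[x, z]`
would undercut the total mass of `[x, z]` by about `ε`. -/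
lemma exists_massFn_le_right {x z : ℝ} (hw : ContinuousOn w (Icc x z)) (hα : 0 < α)
    (hxz : x < z) (hfin : massFn α w x z ≠ ⊤) {ε : ℝ} (hε : 0 < ε) :
    ∃ y ∈ Ioc x z, massFn α w x y ≤ ENNReal.ofReal ε := by
  by_contra! hbig
  obtain ⟨δ₀, hδ₀, hshort⟩ := exists_pos_gammaDelta_le hw hα (half_pos hε)
  have key : massFn α w x z + ENNReal.ofReal ε ≤ massFn α w x z + ENNReal.ofReal (ε / 2) := by
    refine massFn_add_le_of (lt_min hδ₀ (sub_pos.2 hxz)) fun δ hδ hδmin => ?_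
    have hy : x + δ ∈ Ioc x z := ⟨by linarith, by linarith [min_le_right δ₀ (z - x)]⟩
    calc gammaDelta α w x z δ + ENNReal.ofReal ε
        ≤ (gammaDelta α w x (x + δ) δ + gammaDelta α w (x + δ) z δ) + massFn α w x (x + δ) :=
          add_le_add (gammaDelta_le_add _ _ _ _) (hbig _ hy).le
      _ ≤ (ENNReal.ofReal (ε / 2) + massFn α w (x + δ) z) + massFn α w x (x + δ) := by
          gcongr
          · exact hshort le_rfl hy.1.le hy.2 (by linarith) (hδmin.trans (min_le_left _ _))
          · exact gammaDelta_le_massFn hδ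
      _ = massFn α w x z + ENNReal.ofReal (ε / 2) := by
          rw [add_assoc, add_comm (massFn α w _ z), massFn_add_massFn hw hα hy.1.le hy.2, add_comm]
  have := (ENNReal.add_le_add_iff_left hfin).1 key
  linarith [(ENNReal.ofReal_le_ofReal_iff (by positivity)).1 this]

lemma exists_massFn_le_left {x z : ℝ} (hw : ContinuousOn w (Icc x z)) (hα : 0 < α)
    (hxz : x < z) (hfin : massFn α w x z ≠ ⊤) {ε : ℝ} (hε : 0 < ε) :
    ∃ y ∈ Ico x z, massFn α w y z ≤ ENNReal.ofReal ε := by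
  by_contra! hbig
  obtain ⟨δ₀, hδ₀, hshort⟩ := exists_pos_gammaDelta_le hw hα (half_pos hε)
  have key : massFn α w x z + ENNReal.ofReal ε ≤ massFn α w x z + ENNReal.ofReal (ε / 2) := by
    refine massFn_add_le_of (lt_min hδ₀ (sub_pos.2 hxz)) fun δ hδ hδmin => ?_
    have hy : z - δ ∈ Ico x z := ⟨by linarith [min_le_right δ₀ (z - x)], by linarith⟩
    calc gammaDelta α w x z δ + ENNReal.ofReal ε
        ≤ (gammaDelta α w x (z - δ) δ + gammaDelta α w (z - δ) z δ) + massFn α w (z - δ) z :=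
          add_le_add (gammaDelta_le_add _ _ _ _) (hbig _ hy).le
      _ ≤ (massFn α w x (z - δ) + ENNReal.ofReal (ε / 2)) + massFn α w (z - δ) z := by
          gcongr
          · exact gammaDelta_le_massFn hδ
          · exact hshort hy.1 hy.2.le le_rfl (by linarith) (hδmin.trans (min_le_left _ _))
      _ = massFn α w x z + ENNReal.ofReal (ε / 2) := by
          rw [add_right_comm, massFn_add_massFn hw hα hy.1 hy.2.le]
  have := (ENNReal.add_le_add_iff_left hfin).1 key
  linarith [(ENNReal.ofReal_le_ofReal_iff (by positivity)).1 this]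

variable {a₀ b₀ : ℝ}

lemma SF_eq_SF_add (hw : ContinuousOn w (Icc a₀ b₀)) (hα : 0 < α) (hfin : massFn α w a₀ b₀ ≠ ⊤)
    {y z : ℝ} (hy : a₀ ≤ y) (hyz : y ≤ z) (hz : z ≤ b₀) :
    SF α w a₀ z = SF α w a₀ y + (massFn α w y z).toReal := by
  have hsplit := massFn_add_massFn (hw.mono (Icc_subset_Icc le_rfl hz)) hα hy hyz
  have hfin' := ne_top_of_le_ne_top hfin (massFn_mono hw hα le_rfl (hy.trans hyz) hz)
  rw [← hsplit, ENNReal.add_ne_top] at hfin'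
  rw [SF, SF, ← hsplit, ENNReal.toReal_add hfin'.1 hfin'.2]

lemma monotoneOn_SF (hw : ContinuousOn w (Icc a₀ b₀)) (hα : 0 < α)
    (hfin : massFn α w a₀ b₀ ≠ ⊤) : MonotoneOn (SF α w a₀) (Icc a₀ b₀) := fun y hy z hz hyz => by
  rw [SF_eq_SF_add hw hα hfin hy.1 hyz hz.2]
  exact le_add_of_nonneg_right ENNReal.toReal_nonneg

lemma SF_le_SF_add_of_massFn_le (hw : ContinuousOn w (Icc a₀ b₀)) (hα : 0 < α)
    (hfin : massFn α w a₀ b₀ ≠ ⊤) {y z ε : ℝ} (hy : a₀ ≤ y) (hyz : y ≤ z) (hz : z ≤ b₀)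
    (hε : 0 ≤ ε) (hle : massFn α w y z ≤ ENNReal.ofReal ε) : SF α w a₀ z ≤ SF α w a₀ y + ε := by
  rw [SF_eq_SF_add hw hα hfin hy hyz hz]
  gcongr
  exact ENNReal.toReal_le_of_le_ofReal hε hle

lemma continuousOn_SF (hw : ContinuousOn w (Icc a₀ b₀)) (hα : 0 < α)
    (hfin : massFn α w a₀ b₀ ≠ ⊤) : ContinuousOn (SF α w a₀) (Icc a₀ b₀) := by
  have hmono := monotoneOn_SF hw hα hfin
  have hfin' : ∀ {y z}, a₀ ≤ y → y ≤ z → z ≤ b₀ → massFn α w y z ≠ ⊤ := fun hy hyz hz =>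
    ne_top_of_le_ne_top hfin (massFn_mono hw hα hy hyz hz)
  intro s hs
  refine tendsto_order.2 ⟨fun c hc => ?_, fun c hc => ?_⟩
  · rcases hs.1.eq_or_lt with rfl | has
    · filter_upwards [self_mem_nhdsWithin] with r hr
      exact hc.trans_le (hmono hs hr hr.1)
    obtain ⟨y, hy, hys⟩ := exists_massFn_le_left (hw.mono (Icc_subset_Icc le_rfl hs.2)) hα has
      (hfin' le_rfl has.le hs.2) (half_pos (sub_pos.2 hc))
    have hcy : c < SF α w a₀ y := by
      linarith [SF_le_SF_add_of_massFn_le hw hα hfin hy.1 hy.2.le hs.2 (by linarith) hys]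
    filter_upwards [self_mem_nhdsWithin, nhdsWithin_le_nhds (Ioi_mem_nhds hy.2)] with r hr hyr
    exact hcy.trans_le (hmono ⟨hy.1, hy.2.le.trans hs.2⟩ hr hyr.le)
  · rcases hs.2.eq_or_lt with rfl | hsb
    · filter_upwards [self_mem_nhdsWithin] with r hr
      exact (hmono hr hs hr.2).trans_lt hc
    obtain ⟨y, hy, hsy⟩ := exists_massFn_le_right (hw.mono (Icc_subset_Icc hs.1 le_rfl)) hα hsb
      (hfin' hs.1 hsb.le le_rfl) (half_pos (sub_pos.2 hc))
    have hcy : SF α w a₀ y < c := by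
      linarith [SF_le_SF_add_of_massFn_le hw hα hfin hs.1 hy.1.le hy.2 (by linarith) hsy]
    filter_upwards [self_mem_nhdsWithin, nhdsWithin_le_nhds (Iio_mem_nhds hy.1)] with r hr hry
    exact (hmono hr ⟨hs.1.trans hy.1.le, hy.2⟩ hry.le).trans_lt hcy

end Staircase

section Taylor

open FormalMultilinearSeries

lemma iteratedDeriv_eq_of_hasFPowerSeriesAt_ofScalars {f : ℝ → ℝ} {c : ℕ → ℝ} {y : ℝ}
    (hf : HasFPowerSeriesAt f (ofScalars ℝ c) y) (k : ℕ) : iteratedDeriv k f y = k ! * c k := by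
  have hc := ofScalars_series_injective (𝕜 := ℝ) (E := ℝ)
    (hf.eq_formalMultilinearSeries hf.analyticAt.hasFPowerSeriesAt)
  rw [congrFun hc k]
  field_simp

lemma le_radius_ofScalars_of_summable {c : ℕ → ℝ} {x : ℝ} (hc : Summable fun k => c k * x ^ k) :
    (‖x‖₊ : ℝ≥0∞) ≤ (ofScalars ℝ c).radius :=
  le_radius_of_summable_norm _ (by simpa [abs_mul, abs_pow] using hc.abs)

variable {g : ℝ → ℝ} {p q : ℝ}

lemma eventually_eq_or_mem_Ioo (y : ℝ) :
    ∀ᶠ x in 𝓝[Icc p q] y, x = y ∨ x ∈ Ioo p q := by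
  have hend : ∀ e, ∀ᶠ x in 𝓝 y, x = e → y = e := fun e => by
    rcases eq_or_ne y e with h | h
    · exact .of_forall fun _ _ => h
    · exact (eventually_ne_nhds h).mono fun x hx hxe => absurd hxe hx
  filter_upwards [self_mem_nhdsWithin, nhdsWithin_le_nhds (hend p), nhdsWithin_le_nhds (hend q)]
    with x hx hxp hxq
  by_cases hxy : x = y
  · exact .inl hxy
  · exact .inr ⟨hx.1.lt_of_ne fun h => hxy (h ▸ hxp h.symm).symm,
      hx.2.lt_of_ne fun h => hxy (h ▸ hxq h).symm⟩

/-- The Taylor series of `g` at `y` sums to an analytic `P` with `P = g` on `[p, q]`. Then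
`iteratedDeriv k P = iteratedDeriv k g` near `y` in `[p, q]`: at `y` both are `k!` times the `k`-th
coefficient, and at interior points `P = g` on a neighbourhood. -/
lemma hasDerivWithinAt_iteratedDeriv_of_hasSum_taylor (hpq : p < q)
    (hT : ∀ u ∈ Icc p q, ∀ y ∈ Icc p q,
      HasSum (fun k => (u - y) ^ k / (k ! : ℝ) * iteratedDeriv k g y) (g u))
    (k : ℕ) {y : ℝ} (hy : y ∈ Icc p q) :
    HasDerivWithinAt (iteratedDeriv k g) (iteratedDeriv (k + 1) g y) (Icc p q) y := by
  set c : ℕ → ℝ := fun k => iteratedDeriv k g y / (k ! : ℝ)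
  set P : ℝ → ℝ := fun x => (ofScalars ℝ c).sum (x - y)
  have hsum : ∀ u ∈ Icc p q, HasSum (fun k => c k * (u - y) ^ k) (g u) := fun u hu =>
    (hT u hu y hy).congr_fun fun k => by simp only [c]; ring
  have hPg : ∀ u ∈ Icc p q, P u = g u := fun u hu => by
    rw [← (hsum u hu).tsum_eq]
    exact (ofScalars_sum_eq c (u - y)).trans (tsum_congr fun k => smul_eq_mul _ _)
  obtain ⟨u, hu, huy⟩ : ∃ u ∈ Icc p q, u ≠ y := by
    rcases eq_or_ne y p with rfl | h
    · exact ⟨q, ⟨hpq.le, le_rfl⟩, hpq.ne'⟩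
    · exact ⟨p, ⟨le_rfl, hpq.le⟩, h.symm⟩
  have hrad : 0 < (ofScalars ℝ c).radius := lt_of_lt_of_le (by simpa using sub_ne_zero.2 huy)
    (le_radius_ofScalars_of_summable (hsum u hu).summable)
  have hP : HasFPowerSeriesAt P (ofScalars ℝ c) y := by
    simpa using (((ofScalars ℝ c).hasFPowerSeriesOnBall hrad).comp_sub y).hasFPowerSeriesAt
  have hPy : ∀ j, iteratedDeriv j P y = iteratedDeriv j g y := fun j => by
    rw [iteratedDeriv_eq_of_hasFPowerSeriesAt_ofScalars hP]
    simp only [c]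
    field_simp
  have hev : iteratedDeriv k P =ᶠ[𝓝[Icc p q] y] iteratedDeriv k g := by
    filter_upwards [eventually_eq_or_mem_Ioo y] with x hx
    rcases hx with rfl | hx
    · exact hPy k
    · refine Filter.EventuallyEq.iteratedDeriv_eq k ?_
      filter_upwards [Ioo_mem_nhds hx.1 hx.2] with v hv using hPg v (Ioo_subset_Icc_self hv)
  have hderiv : HasDerivAt (iteratedDeriv k P) (iteratedDeriv (k + 1) P y) y := by
    rw [iteratedDeriv_succ]
    refine DifferentiableAt.hasDerivAt ?_
    rw [iteratedDeriv_eq_iterate]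
    exact (hP.analyticAt.iterated_deriv k).differentiableAt
  rw [← hPy]
  exact hderiv.hasDerivWithinAt.congr_of_eventuallyEq hev.symm (hPy k).symm

end Taylor

section FDerivative

variable {n : ℕ} {F : Set (EuclideanSpace ℝ (Fin n))}

lemma isFLimit_iff_tendsto {f : EuclideanSpace ℝ (Fin n) → ℝ} {θ : EuclideanSpace ℝ (Fin n)}
    {l : ℝ} : IsFLimit F f θ l ↔ Tendsto f (𝓝[F \ {θ}] θ) (𝓝 l) := by
  simp only [Metric.tendsto_nhdsWithin_nhds, IsFLimit, Set.mem_sdiff, mem_singleton_iff,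
    dist_eq_norm, Real.norm_eq_abs, and_imp]

lemma nhdsWithin_Icc_diff_singleton_neBot {a b r : ℝ} (hab : a < b) (hr : r ∈ Icc a b) :
    (𝓝[Icc a b \ {r}] r).NeBot := by
  rcases hr.2.lt_or_eq with hrb | rfl
  · exact (left_nhdsWithin_Ioo_neBot hrb).mono
      (nhdsWithin_mono _ fun x hx => ⟨⟨hr.1.trans hx.1.le, hx.2.le⟩, hx.1.ne'⟩)
  · exact (right_nhdsWithin_Ioo_neBot hab).mono
      (nhdsWithin_mono _ fun x hx => ⟨⟨hx.1.le, hx.2.le⟩, hx.2.ne⟩)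

/-- Reading `f ∘ w` as `G ∘ S` with `J ∘ w = S`, the `F^α`-difference quotients of `f` along the
curve are the ordinary slopes of `G` along `S`, so the two derivatives coincide. -/
lemma HasFAlphaDerivAt.eq_of_hasDerivWithinAt {J f : EuclideanSpace ℝ (Fin n) → ℝ}
    {w : ℝ → EuclideanSpace ℝ (Fin n)} {S G : ℝ → ℝ} {s K : Set ℝ} {r l G' : ℝ}
    (hf : HasFAlphaDerivAt F J f (w r) l) (hG : HasDerivWithinAt G G' K (S r))
    (hr : r ∈ s) [(𝓝[s \ {r}] r).NeBot] (hwF : MapsTo w s F) (hSK : MapsTo S s K)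
    (hw : ContinuousWithinAt w s r) (hwinj : InjOn w s)
    (hS : ContinuousWithinAt S s r) (hSinj : InjOn S s)
    (hJ : ∀ t ∈ s, J (w t) = S t) (hfG : ∀ t ∈ s, f (w t) = G (S t)) : l = G' := by
  have hne : ∀ᶠ t in 𝓝[s \ {r}] r, t ∈ s ∧ t ≠ r := self_mem_nhdsWithin
  have hwlim : Tendsto w (𝓝[s \ {r}] r) (𝓝[F \ {w r}] (w r)) :=
    tendsto_nhdsWithin_iff.2 ⟨(hw.mono sdiff_subset).tendsto,
      hne.mono fun t ht => ⟨hwF ht.1, fun h => ht.2 (hwinj ht.1 hr h)⟩⟩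
  have hSlim : Tendsto S (𝓝[s \ {r}] r) (𝓝[K \ {S r}] (S r)) :=
    tendsto_nhdsWithin_iff.2 ⟨(hS.mono sdiff_subset).tendsto,
      hne.mono fun t ht => ⟨hSK ht.1, fun h => ht.2 (hSinj ht.1 hr h)⟩⟩
  refine tendsto_nhds_unique ((isFLimit_iff_tendsto.1 hf).comp hwlim) ?_
  refine ((hasDerivWithinAt_iff_tendsto_slope.1 hG).comp hSlim).congr' (hne.mono fun t ht => ?_)
  simp only [Function.comp_apply, slope_def_field, hJ t ht.1, hJ r hr, hfG t ht.1, hfG r hr]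

lemma eq_iteratedDeriv_of_hasFAlphaDerivAt {J : EuclideanSpace ℝ (Fin n) → ℝ}
    {w : ℝ → EuclideanSpace ℝ (Fin n)} {S g : ℝ → ℝ} {f : ℕ → EuclideanSpace ℝ (Fin n) → ℝ}
    {a b : ℝ} (hab : a < b) (hwF : MapsTo w (Icc a b) F) (hw : ContinuousOn w (Icc a b))
    (hwinj : InjOn w (Icc a b)) (hS : ContinuousOn S (Icc a b)) (hSmono : StrictMonoOn S (Icc a b))
    (hJ : ∀ t ∈ Icc a b, J (w t) = S t)
    (hf : ∀ k, ∀ t ∈ Icc a b, HasFAlphaDerivAt F J (f k) (w t) (f (k + 1) (w t)))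
    (hg : ∀ k, ∀ y ∈ Icc (S a) (S b),
      HasDerivWithinAt (iteratedDeriv k g) (iteratedDeriv (k + 1) g y) (Icc (S a) (S b)) y)
    (hf₀ : ∀ t ∈ Icc a b, f 0 (w t) = g (S t)) :
    ∀ k, ∀ t ∈ Icc a b, f k (w t) = iteratedDeriv k g (S t) := by
  have hSK := hSmono.monotoneOn.mapsTo_Icc
  intro k
  induction k with
  | zero => simpa using hf₀
  | succ k ih =>
    intro t ht
    have := nhdsWithin_Icc_diff_singleton_neBot hab ht
    exact (hf k t ht).eq_of_hasDerivWithinAt (hg k _ (hSK ht)) ht hwF hSK (hw t ht) hwinj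
      (hS t ht) hSmono.injOn hJ ih

end FDerivative

theorem fractal_taylor_series_general {n : ℕ} {a₀ b₀ : ℝ}
    (w : ℝ → EuclideanSpace ℝ (Fin n))
    (hw : ContinuousOn w (Icc a₀ b₀)) (hinj : InjOn w (Icc a₀ b₀))
    {α : ℝ} (hα : α ∈ Icc (1 : ℝ) (n : ℝ))
    (hfin : ∀ t ∈ Icc a₀ b₀, massFn α w a₀ t ≠ ⊤)
    (hS : StrictMonoOn (SF α w a₀) (Icc a₀ b₀))
    (J : EuclideanSpace ℝ (Fin n) → ℝ)
    (hJ : ∀ t ∈ Icc a₀ b₀, J (w t) = SF α w a₀ t)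
    (h : EuclideanSpace ℝ (Fin n) → ℝ)
    (Dh : ℕ → EuclideanSpace ℝ (Fin n) → ℝ) (hDh0 : Dh 0 = h)
    (hDh : ∀ k : ℕ, ∀ θ ∈ w '' Icc a₀ b₀,
      HasFAlphaDerivAt (w '' Icc a₀ b₀) J (Dh k) θ (Dh (k + 1) θ))
    {a b : ℝ} (ha : a₀ ≤ a) (hab : a ≤ b) (hb : b ≤ b₀)
    (g : ℝ → ℝ) (hg : ∀ t ∈ Icc a₀ b₀, g (SF α w a₀ t) = h (w t))
    (hTaylor : ∀ u ∈ Icc (SF α w a₀ a) (SF α w a₀ b),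
      ∀ y ∈ Icc (SF α w a₀ a) (SF α w a₀ b),
        HasSum (fun k : ℕ =>
          (u - y) ^ k / (Nat.factorial k : ℝ) * iteratedDeriv k g y) (g u)) :
    ∀ θ ∈ w '' Icc a b, ∀ θ' ∈ w '' Icc a b,
      HasSum (fun k : ℕ =>
        (J θ - J θ') ^ k / (Nat.factorial k : ℝ) * Dh k θ') (h θ) := by
  rintro _ ⟨t, ht, rfl⟩ _ ⟨s, hs, rfl⟩
  have hsub : Icc a b ⊆ Icc a₀ b₀ := Icc_subset_Icc ha hb
  rw [hJ t (hsub ht), hJ s (hsub hs), ← hg t (hsub ht)]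
  rcases hab.eq_or_lt with rfl | hab
  · obtain rfl : t = s := le_antisymm (ht.2.trans hs.1) (hs.2.trans ht.1)
    rw [sub_self]
    convert hasSum_single (f := fun k => (0 : ℝ) ^ k / (k ! : ℝ) * Dh k (w t)) 0
      fun k hk => by simp [hk]
    simp [hDh0, hg t (hsub ht)]
  have hSF := continuousOn_SF hw (by linarith [hα.1]) (hfin b₀ ⟨ha.trans (hab.le.trans hb), le_rfl⟩)
  have hSK := (hS.mono hsub).monotoneOn.mapsTo_Icc
  have key := eq_iteratedDeriv_of_hasFAlphaDerivAt hab (fun t ht => mem_image_of_mem w (hsub ht))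
    (hw.mono hsub) (hinj.mono hsub) (hSF.mono hsub) (hS.mono hsub) (fun t ht => hJ t (hsub ht))
    (fun k t ht => hDh k _ (mem_image_of_mem w (hsub ht)))
    (hasDerivWithinAt_iteratedDeriv_of_hasSum_taylor (hS (hsub ⟨le_rfl, hab.le⟩)
      (hsub ⟨hab.le, le_rfl⟩) hab) hTaylor)
    (fun t ht => by rw [hDh0, hg t (hsub ht)])
  simpa only [key _ s hs] using hTaylor _ (hSK ht) _ (hSK hs)

/-- fractal Taylor series: if h is F^α-differentiable any number
of times on F, with each iterated F^α-derivative Dh k bounded (Dh 0 = h,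
Dh (k+1) = D_F^α (Dh k)), and g = φ[h] admits the ordinary Taylor expansion
g(u) = Σ_k (u−y)^k/k! · g⁽ᵏ⁾(y) for all u, y ∈ [S_F^α(a), S_F^α(b)], then for
all θ, θ' ∈ C(a,b):  h(θ) = Σ_k (J(θ)−J(θ'))^k/k! · ((D_F^α)^k h)(θ'). -/
theorem fractal_taylor_series {n : ℕ} (hn : 1 ≤ n) {a₀ b₀ : ℝ}
    (w : ℝ → EuclideanSpace ℝ (Fin n))
    (hw : ContinuousOn w (Icc a₀ b₀)) (hinj : InjOn w (Icc a₀ b₀))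
    {α : ℝ} (hα : α ∈ Icc (1 : ℝ) (n : ℝ))
    (hfin : ∀ t ∈ Icc a₀ b₀, massFn α w a₀ t ≠ ⊤)
    (hS : StrictMonoOn (SF α w a₀) (Icc a₀ b₀))
    (J : EuclideanSpace ℝ (Fin n) → ℝ)
    (hJ : ∀ t ∈ Icc a₀ b₀, J (w t) = SF α w a₀ t)
    (h : EuclideanSpace ℝ (Fin n) → ℝ)
    (Dh : ℕ → EuclideanSpace ℝ (Fin n) → ℝ) (hDh0 : Dh 0 = h)
    (hDh : ∀ k : ℕ, ∀ θ ∈ w '' Icc a₀ b₀,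
      HasFAlphaDerivAt (w '' Icc a₀ b₀) J (Dh k) θ (Dh (k + 1) θ))
    (hbdd : ∀ k : ℕ, ∃ M, ∀ θ ∈ w '' Icc a₀ b₀, |Dh k θ| ≤ M)
    {a b : ℝ} (ha : a₀ ≤ a) (hab : a ≤ b) (hb : b ≤ b₀)
    (g : ℝ → ℝ) (hg : ∀ t ∈ Icc a₀ b₀, g (SF α w a₀ t) = h (w t))
    (hTaylor : ∀ u ∈ Icc (SF α w a₀ a) (SF α w a₀ b),
      ∀ y ∈ Icc (SF α w a₀ a) (SF α w a₀ b),
        HasSum (fun k : ℕ =>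
          (u - y) ^ k / (Nat.factorial k : ℝ) * iteratedDeriv k g y) (g u)) :
    ∀ θ ∈ w '' Icc a b, ∀ θ' ∈ w '' Icc a b,
      HasSum (fun k : ℕ =>
        (J θ - J θ') ^ k / (Nat.factorial k : ℝ) * Dh k θ') (h θ) :=
  fractal_taylor_series_general w hw hinj hα hfin hS J hJ h Dh hDh0 hDh ha hab hb g hg hTaylor
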